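/- Let λ ∈ ℂ with |arg λ| ≤ ν < π/2. Then for all 0 < s ≤ t, |e^(−(t−s)λ)(1 − e^(−2sλ))| ≤ C s/t, with C depending only on ν. -/

import Mathlib

/-!
With `a = Re λ ≥ cos ν · |λ|`, the first factor has modulus `e^{-(t-s)a}` and the second is at most
`min 2 (2s|λ|) ≤ (2 / cos ν) · min 1 (sa)`, since `w ↦ e^w` is `1`-Lipschitz on `Re w ≤ 0`.
Putting `u = sa ≤ x = ta`, the bound `x e^{u-x} ≤ max 1 u` (from `e^{x-u} ≥ 1 + x - u`) and
`max 1 u · min 1 u = u` give `t · e^{-(t-s)a} · min 1 (sa) ≤ s`, so `C = 2 / cos ν` works.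
-/

open Complex in
theorem Complex.norm_exp_sub_one_le_norm_of_re_nonpos {z : ℂ} (hz : z.re ≤ 0) :
    ‖exp z - 1‖ ≤ ‖z‖ := by
  have h := (convex_halfSpace_re_le (0 : ℝ)).norm_image_sub_le_of_norm_deriv_le
    (f := exp) (C := 1) (fun w _ => differentiableAt_exp)
    (fun w hw => by rw [Complex.deriv_exp, norm_exp]; exact Real.exp_le_one_iff.2 hw)
    (show (0 : ℂ).re ≤ 0 from le_rfl) hz
  simpa using h

theorem Complex.norm_one_sub_exp_neg_le_min {z : ℂ} (hz : 0 ≤ z.re) :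
    ‖1 - exp (-z)‖ ≤ min 2 ‖z‖ := by
  refine le_min ?_ ?_
  · calc ‖1 - exp (-z)‖ ≤ ‖(1 : ℂ)‖ + ‖exp (-z)‖ := norm_sub_le _ _
      _ ≤ 1 + 1 := by
        rw [norm_one, norm_exp, neg_re]
        gcongr
        exact Real.exp_le_one_iff.2 (neg_nonpos.2 hz)
      _ = 2 := by norm_num
  · rw [← norm_neg, neg_sub, ← norm_neg z]
    exact norm_exp_sub_one_le_norm_of_re_nonpos (by simpa using hz)

theorem Real.mul_exp_sub_le_max_one {u x : ℝ} (hux : u ≤ x) :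
    x * exp (u - x) ≤ max 1 u := by
  have hexp : x - u + 1 ≤ exp (x - u) := add_one_le_exp _
  have hx : x ≤ max 1 u * exp (x - u) := by
    nlinarith [le_max_left 1 u, le_max_right 1 u]
  calc x * exp (u - x) ≤ max 1 u * exp (x - u) * exp (u - x) := by gcongr
    _ = max 1 u := by rw [mul_assoc, ← exp_add]; simp

theorem Real.mul_exp_sub_mul_mul_min_one_le {a s t : ℝ} (ha : 0 ≤ a) (hs : 0 ≤ s) (hst : s ≤ t) :
    t * exp (s * a - t * a) * min 1 (s * a) ≤ s := by
  rcases ha.eq_or_lt with rfl | ha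
  · simpa using hs
  have key := mul_exp_sub_le_max_one (mul_le_mul_of_nonneg_right hst ha.le)
  have := mul_le_mul_of_nonneg_right key (le_min zero_le_one (mul_nonneg hs ha.le))
  rw [max_mul_min] at this
  nlinarith

theorem Complex.cos_mul_norm_le_re {z : ℂ} {ν : ℝ} (hν : ν ≤ Real.pi) (hz : |z.arg| ≤ ν) :
    Real.cos ν * ‖z‖ ≤ z.re := by
  rw [← norm_mul_cos_arg z, mul_comm, ← Real.cos_abs z.arg]
  exact mul_le_mul_of_nonneg_left (Real.cos_le_cos_of_nonneg_of_le_pi (abs_nonneg _) hν hz)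
    (norm_nonneg z)

open Complex in
theorem norm_exp_neg_mul_mul_one_sub_exp_neg_le {c : ℝ} (hc : 0 < c) (hc1 : c ≤ 1) {lam : ℂ}
    (hlam : c * ‖lam‖ ≤ lam.re) {s t : ℝ} (hs : 0 < s) (hst : s ≤ t) :
    ‖exp (-(((t : ℂ) - (s : ℂ)) * lam)) * (1 - exp (-(2 * (s : ℂ) * lam)))‖ ≤
      2 / c * (s / t) := by
  set a := lam.re
  have ha : 0 ≤ a := le_trans (by positivity) hlam
  have hdecay : ‖exp (-(((t : ℂ) - (s : ℂ)) * lam))‖ = Real.exp (s * a - t * a) := by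
    rw [norm_exp]
    congr 1
    simp only [neg_re, mul_re, sub_re, ofReal_re, sub_im, ofReal_im, sub_self, zero_mul, sub_zero, a]
    ring
  have hgap : ‖1 - exp (-(2 * (s : ℂ) * lam))‖ ≤ 2 / c * min 1 (s * a) := by
    have hre : 0 ≤ (2 * (s : ℂ) * lam).re := by
      simp only [mul_re, re_ofNat, ofReal_re, im_ofNat, ofReal_im, mul_zero, sub_zero, mul_im,
        zero_mul, add_zero]
      positivity
    have hnorm : ‖2 * (s : ℂ) * lam‖ ≤ 2 / c * (s * a) := by
      rw [norm_mul, norm_mul, Complex.norm_real, Real.norm_of_nonneg hs.le, div_mul_eq_mul_div,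
        le_div_iff₀ hc]
      simp only [Complex.norm_ofNat]
      nlinarith
    calc ‖1 - exp (-(2 * (s : ℂ) * lam))‖ ≤ min 2 ‖2 * (s : ℂ) * lam‖ :=
          norm_one_sub_exp_neg_le_min hre
      _ ≤ min (2 / c * 1) (2 / c * (s * a)) :=
          min_le_min (by rw [mul_one, le_div_iff₀ hc]; nlinarith) hnorm
      _ = 2 / c * min 1 (s * a) := (mul_min_of_nonneg _ _ (by positivity)).symm
  have ht : 0 < t := hs.trans_le hst
  rw [norm_mul, hdecay, mul_div_assoc', le_div_iff₀ ht]
  calc Real.exp (s * a - t * a) * ‖1 - exp (-(2 * (s : ℂ) * lam))‖ * t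
      ≤ Real.exp (s * a - t * a) * (2 / c * min 1 (s * a)) * t := by gcongr
    _ = 2 / c * (t * Real.exp (s * a - t * a) * min 1 (s * a)) := by ring
    _ ≤ 2 / c * s := by
      gcongr; exact Real.mul_exp_sub_mul_mul_min_one_le ha hs.le hst

/-- For `λ` in the sector `|arg λ| ≤ ν < π/2` and `0 < s ≤ t`,
`|e^(−(t−s)λ)(1 − e^(−2sλ))| ≤ C s/t` with `C` depending only on `ν`. -/
theorem stmt_6 (ν : ℝ) (hν : ν < Real.pi / 2) :
    ∃ C : ℝ, 0 < C ∧ ∀ lam : ℂ, |lam.arg| ≤ ν → ∀ s t : ℝ, 0 < s → s ≤ t →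
      ‖Complex.exp (-(((t : ℂ) - (s : ℂ)) * lam)) *
          (1 - Complex.exp (-(2 * (s : ℂ) * lam)))‖ ≤ C * (s / t) := by
  -- For `ν < 0` the sector is empty, but `cos ν` need not be positive.
  set ν' := max ν 0
  have hν' : ν' < Real.pi / 2 := max_lt hν (by positivity)
  have hc : 0 < Real.cos ν' := Real.cos_pos_of_mem_Ioo ⟨by linarith [le_max_right ν 0], hν'⟩
  refine ⟨2 / Real.cos ν', by positivity, fun lam harg s t hs hst => ?_⟩
  have hsector := Complex.cos_mul_norm_le_re (by linarith [Real.pi_pos])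
    (harg.trans (le_max_left ν 0))
  exact norm_exp_neg_mul_mul_one_sub_exp_neg_le hc (Real.cos_le_one _) hsector hs hst
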